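/- (Sufficient decrease, Lemma 3.1.) In the block composite setting, fix x ∈ E, a block index i, and β > 0. Let C ⊆ E be a convex set containing x and x₊, and suppose ∇_i f is L^f_i-Lipschitz on C and ∇_i F is L^F_i-Lipschitz on C (operator norm), with L^F_i > 0 and β > L^f_i. Assume β ≥ L^f_i + L^F_i √(2 L_h) √(φ(x) − φ^*). Let s₊ be a global minimizer over ℝ^{n_i} of q_β(s) = φ̄^i(s;x) + (β/2)‖s − x^i‖² and set x₊ = x[i↦s₊]. Then φ(x₊) ≤ φ(x) − (β/2)‖x₊ − x‖². -/

import Mathlib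

/-!
On block `i` the problem is a single prox-linear step for
`s ↦ f(x[i↦s]) + h(F(x[i↦s])) + gᵢ(s)`, with `g^*` lowered by `Σ_{j≠i} gⱼ(x^j)`.
Write `d = s₊ − x^i`, `l = F(x) + ∇ᵢF(x) d` and `e = F(x₊) − l`. The descent lemmas bound
`f(x₊)` by its linearization plus `(L_f/2)‖d‖²`, and `h(F(x₊))` by
`h(l) + ⟪∇h(l), e⟫ + (L_h/2)‖e‖²` with `‖e‖ ≤ (L_F/2)‖d‖²`. Strong convexity of the
regularized model gives a model decrease of `β‖d‖²` rather than `(β/2)‖d‖²`; this forces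
`h(l) − h^* ≤ φ(x) − φ^* − (β − L_f)‖d‖²`, and `‖∇h(l)‖² ≤ 2L_h (h(l) − h^*)` then lets the
step-size condition absorb the error terms into the spare `(β/2)‖d‖²`.
-/

open scoped RealInnerProductSpace

/-- `upd x i s` is `x` with its `i`-th block replaced by `s`, in the Euclidean
product space `E = ℝ^{n 0} × ⋯ × ℝ^{n (b-1)}`. -/
noncomputable def upd {b : ℕ} {n : Fin b → ℕ}
    (x : PiLp 2 (fun i => EuclideanSpace ℝ (Fin (n i)))) (i : Fin b)
    (s : EuclideanSpace ℝ (Fin (n i))) :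
    PiLp 2 (fun i => EuclideanSpace ℝ (Fin (n i))) :=
  WithLp.toLp 2 (Function.update x i s)

open Set Filter Topology

section Smoothness

variable {H K : Type*} [NormedAddCommGroup H] [NormedAddCommGroup K]

theorem norm_image_sub_sub_fderiv_le_of_lipschitz [NormedSpace ℝ H] [NormedSpace ℝ K]
    {F : H → K} {F' : H → H →L[ℝ] K} {S : Set H} {x y : H} {L : ℝ}
    (hS : Convex ℝ S) (hx : x ∈ S) (hy : y ∈ S) (hF : ∀ z ∈ S, HasFDerivAt F (F' z) z)
    (hLip : ∀ z ∈ S, ‖F' z - F' x‖ ≤ L * ‖z - x‖) :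
    ‖F y - F x - F' x (y - x)‖ ≤ L / 2 * ‖y - x‖ ^ 2 := by
  set v := y - x
  have hseg : ∀ t ∈ Icc (0 : ℝ) 1, x + t • v ∈ S := fun t ht => hS.add_smul_sub_mem hx hy ht
  set r : ℝ → K := fun t => F (x + t • v) - F x - t • F' x v
  have hr : ∀ t ∈ Icc (0 : ℝ) 1, HasDerivAt r (F' (x + t • v) v - F' x v) t := by
    intro t ht
    have hline : HasDerivAt (fun t : ℝ => x + t • v) v t := by
      simpa using ((hasDerivAt_id t).smul_const v).const_add x
    have hlin : HasDerivAt (fun t : ℝ => t • F' x v) (F' x v) t := by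
      simpa using (hasDerivAt_id t).smul_const (F' x v)
    exact (((hF _ (hseg t ht)).comp_hasDerivAt t hline).sub_const (F x)).sub hlin
  have hbound : ∀ t ∈ Icc (0 : ℝ) 1, ‖r t‖ ≤ L * ‖v‖ ^ 2 * t ^ 2 / 2 := by
    refine image_norm_le_of_norm_deriv_right_le_deriv_boundary
      (B := fun t => L * ‖v‖ ^ 2 * t ^ 2 / 2) (B' := fun t => L * ‖v‖ ^ 2 * t)
      (fun t ht => (hr t ht).continuousAt.continuousWithinAt)
      (fun t ht => (hr t (Ico_subset_Icc_self ht)).hasDerivWithinAt) (by simp [r])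
      (fun t => ((hasDerivAt_pow 2 t).const_mul _).div_const 2 |>.congr_deriv (by ring))
      fun t ht => ?_
    have ht' := Ico_subset_Icc_self ht
    calc ‖F' (x + t • v) v - F' x v‖ ≤ ‖F' (x + t • v) - F' x‖ * ‖v‖ :=
          ((F' (x + t • v) - F' x).le_opNorm v)
      _ ≤ L * ‖t • v‖ * ‖v‖ := by
          gcongr
          simpa using hLip _ (hseg t ht')
      _ = L * ‖v‖ ^ 2 * t := by rw [norm_smul, Real.norm_of_nonneg ht'.1]; ring
  calc ‖F y - F x - F' x v‖ = ‖r 1‖ := by simp [r, v]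
    _ ≤ L * ‖v‖ ^ 2 * 1 ^ 2 / 2 := hbound 1 (right_mem_Icc.2 zero_le_one)
    _ = L / 2 * ‖v‖ ^ 2 := by ring

variable [InnerProductSpace ℝ H] [CompleteSpace H]

theorem descent_lemma {f : H → ℝ} {f' : H → H} {S : Set H} {x y : H} {L : ℝ}
    (hS : Convex ℝ S) (hx : x ∈ S) (hy : y ∈ S) (hf : ∀ z ∈ S, HasGradientAt f (f' z) z)
    (hLip : ∀ z ∈ S, ‖f' z - f' x‖ ≤ L * ‖z - x‖) :
    f y ≤ f x + ⟪f' x, y - x⟫ + L / 2 * ‖y - x‖ ^ 2 := by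
  have := norm_image_sub_sub_fderiv_le_of_lipschitz
    (F' := fun z => InnerProductSpace.toDual ℝ H (f' z)) hS hx hy hf (fun z hz => by simpa [← map_sub] using hLip z hz)
  rw [InnerProductSpace.toDual_apply_apply, Real.norm_eq_abs, abs_le] at this
  linarith [this.2]

theorem norm_sq_gradient_le_of_lipschitz {h : H → ℝ} {h' : H → H} {L hstar : ℝ} (hL : 0 < L)
    (hh : ∀ u, HasGradientAt h (h' u) u) (hLip : ∀ u v, ‖h' u - h' v‖ ≤ L * ‖u - v‖)
    (hhstar : ∀ u, hstar ≤ h u) (u : H) :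
    ‖h' u‖ ^ 2 ≤ 2 * L * (h u - hstar) := by
  have hdesc := descent_lemma (y := u - L⁻¹ • h' u) convex_univ (mem_univ u) (mem_univ _)
    (fun z _ => hh z) (fun z _ => hLip z u)
  rw [sub_sub_cancel_left, inner_neg_right, inner_smul_right, real_inner_self_eq_norm_sq,
    norm_neg, norm_smul, Real.norm_of_nonneg (inv_nonneg.2 hL.le)] at hdesc
  have hstep : ‖h' u‖ ^ 2 / (2 * L) ≤ h u - hstar := by
    have : hstar ≤ h u - ‖h' u‖ ^ 2 / (2 * L) :=
      calc hstar ≤ h (u - L⁻¹ • h' u) := hhstar _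
        _ ≤ _ := hdesc
        _ = h u - ‖h' u‖ ^ 2 / (2 * L) := by field_simp; ring
    linarith
  rwa [div_le_iff₀ (by positivity), mul_comm] at hstep

end Smoothness

theorem ConvexOn.le_sub_mul_norm_sq_of_forall_le {H : Type*} [NormedAddCommGroup H]
    [NormedSpace ℝ H] {ψ : H → ℝ} (hψ : ConvexOn ℝ univ ψ) {β : ℝ} {a s : H}
    (hmin : ∀ t, ψ s + β / 2 * ‖s - a‖ ^ 2 ≤ ψ t + β / 2 * ‖t - a‖ ^ 2) :
    ψ s ≤ ψ a - β * ‖s - a‖ ^ 2 := by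
  set δ := ‖s - a‖ ^ 2
  have hθ : ∀ θ ∈ Ioo (0 : ℝ) 1, ψ s - ψ a + β * δ ≤ β / 2 * δ * θ := by
    rintro θ ⟨hθ0, hθ1⟩
    have hconv := hψ.2 (mem_univ s) (mem_univ a) (by linarith) hθ0.le (sub_add_cancel 1 θ)
    have hdist : ‖(1 - θ) • s + θ • a - a‖ ^ 2 = (1 - θ) ^ 2 * δ := by
      rw [show (1 - θ) • s + θ • a - a = (1 - θ) • (s - a) by module, norm_smul,
        Real.norm_of_nonneg (by linarith), mul_pow]
    have := hmin ((1 - θ) • s + θ • a)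
    rw [hdist] at this
    rw [smul_eq_mul, smul_eq_mul] at hconv
    refine le_of_mul_le_mul_left ?_ hθ0
    nlinarith
  have hlim : Tendsto (fun θ : ℝ => β / 2 * δ * θ) (𝓝[>] 0) (𝓝 0) := by
    simpa using tendsto_nhdsWithin_of_tendsto_nhds ((continuous_const_mul (β / 2 * δ)).tendsto 0)
  have := ge_of_tendsto hlim (by filter_upwards [Ioo_mem_nhdsGT one_pos] using hθ)
  linarith

theorem add_half_le_of_sq_add_le {S B q : ℝ} (hB : 0 < B) (hq : 0 ≤ q)
    (h : S ^ 2 + 2 * B * q ≤ B ^ 2) : S + q / 2 ≤ B := by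
  have hqB : q ≤ B / 2 := by nlinarith [sq_nonneg S]
  by_contra! hlt
  have : (B - q / 2) ^ 2 < S ^ 2 := pow_lt_pow_left₀ (by linarith) (by linarith) two_ne_zero
  nlinarith

theorem ConvexOn.comp_add_clm_sub {H K : Type*} [NormedAddCommGroup H] [NormedSpace ℝ H]
    [NormedAddCommGroup K] [NormedSpace ℝ K] {h : K → ℝ} (hh : ConvexOn ℝ univ h)
    (c : K) (T : H →L[ℝ] K) (a : H) : ConvexOn ℝ univ fun t => h (c + T (t - a)) := by
  refine ⟨convex_univ, fun x _ y _ α β hα hβ hαβ => ?_⟩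
  obtain rfl : β = 1 - α := by linarith
  have hcomb : c + T (α • x + (1 - α) • y - a)
      = α • (c + T (x - a)) + (1 - α) • (c + T (y - a)) := by
    simp only [map_sub, map_add, map_smul]
    module
  simpa only [hcomb] using hh.2 trivial trivial hα hβ hαβ

section ProxLinear

variable {H K : Type*} [NormedAddCommGroup H] [InnerProductSpace ℝ H]
  [NormedAddCommGroup K] [InnerProductSpace ℝ K]

theorem proxLinear_model_le {f : H → ℝ} {F : H → K} {h : K → ℝ} {g : H → ℝ} {G : H}
    {T : H →L[ℝ] K} {a s : H} {β : ℝ} (hh : ConvexOn ℝ univ h) (hg : ConvexOn ℝ univ g)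
    (hmin : ∀ t, f a + ⟪G, s - a⟫ + h (F a + T (s - a)) + g s + β / 2 * ‖s - a‖ ^ 2
      ≤ f a + ⟪G, t - a⟫ + h (F a + T (t - a)) + g t + β / 2 * ‖t - a‖ ^ 2) :
    f a + ⟪G, s - a⟫ + h (F a + T (s - a)) + g s
      ≤ f a + h (F a) + g a - β * ‖s - a‖ ^ 2 := by
  have hinner : ConvexOn ℝ univ fun t => ⟪G, t - a⟫ := by
    simpa using (convexOn_id (𝕜 := ℝ) convex_univ).comp_add_clm_sub 0 (innerSL ℝ G) a
  have hmodel := (((convexOn_const (f a) convex_univ).add hinner).add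
    (hh.comp_add_clm_sub (F a) T a)).add hg
  have := hmodel.le_sub_mul_norm_sq_of_forall_le (β := β) (a := a) (s := s)
    (by simpa only [Pi.add_apply, add_assoc] using hmin)
  simp only [Pi.add_apply, sub_self, inner_zero_right, map_zero, add_zero] at this
  linarith

theorem proxLinear_sufficient_decrease [CompleteSpace H] [CompleteSpace K]
    {f : H → ℝ} {F : H → K} {h : K → ℝ} {g : H → ℝ} {f' : H → H} {F' : H → H →L[ℝ] K}
    {h' : K → K} {S : Set H} {a s : H} {Lf LF Lh β fstar hstar gstar : ℝ}
    (hS : Convex ℝ S) (ha : a ∈ S) (hs : s ∈ S)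
    (hf : ∀ y ∈ S, HasGradientAt f (f' y) y) (hfLip : ∀ y ∈ S, ‖f' y - f' a‖ ≤ Lf * ‖y - a‖)
    (hF : ∀ y ∈ S, HasFDerivAt F (F' y) y) (hFLip : ∀ y ∈ S, ‖F' y - F' a‖ ≤ LF * ‖y - a‖)
    (hhconv : ConvexOn ℝ univ h) (hh : ∀ u, HasGradientAt h (h' u) u) (hLh : 0 < Lh)
    (hhLip : ∀ u v, ‖h' u - h' v‖ ≤ Lh * ‖u - v‖) (hg : ConvexOn ℝ univ g)
    (hfstar : ∀ y, fstar ≤ f y) (hhstar : ∀ u, hstar ≤ h u) (hgstar : ∀ y, gstar ≤ g y)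
    (hLF : 0 ≤ LF) (hβLf : Lf < β)
    (hβ : Lf + LF * √(2 * Lh) * √(f a + h (F a) + g a - (fstar + hstar + gstar)) ≤ β)
    (hmin : ∀ t, f a + ⟪f' a, s - a⟫ + h (F a + F' a (s - a)) + g s + β / 2 * ‖s - a‖ ^ 2
      ≤ f a + ⟪f' a, t - a⟫ + h (F a + F' a (t - a)) + g t + β / 2 * ‖t - a‖ ^ 2) :
    f s + h (F s) + g s ≤ f a + h (F a) + g a - β / 2 * ‖s - a‖ ^ 2 := by
  set δ := ‖s - a‖ ^ 2
  set D := f a + h (F a) + g a - (fstar + hstar + gstar)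
  set l := F a + F' a (s - a)
  have hfs : f s ≤ f a + ⟪f' a, s - a⟫ + Lf / 2 * δ := descent_lemma hS ha hs hf hfLip
  have hFs : ‖F s - l‖ ≤ LF / 2 * δ := by
    rw [← sub_sub]; exact norm_image_sub_sub_fderiv_le_of_lipschitz hS ha hs hF hFLip
  have hh_desc : h (F s) ≤ h l + ⟪h' l, F s - l⟫ + Lh / 2 * ‖F s - l‖ ^ 2 :=
    descent_lemma convex_univ (mem_univ _) (mem_univ _) (fun u _ => hh u) (fun u _ => hhLip u l)
  have hmodel := proxLinear_model_le hhconv hg hmin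
  have hLfδ : 0 ≤ Lf * δ := by
    have : 0 ≤ Lf * ‖s - a‖ := (norm_nonneg _).trans (hfLip s hs)
    simpa only [δ, pow_two, ← mul_assoc] using mul_nonneg this (norm_nonneg (s - a))
  have hl : h l - hstar ≤ D - (β - Lf) * δ := by
    linarith [hfstar s, hgstar s]
  have hgrad := norm_sq_gradient_le_of_lipschitz hLh hh hhLip hhstar l
  have hD : LF ^ 2 * (2 * Lh * D) ≤ (β - Lf) ^ 2 := by
    have hD0 : 0 ≤ D := by linarith [hfstar a, hhstar (F a), hgstar a]
    have := pow_le_pow_left₀ (by positivity) (le_sub_iff_add_le'.2 hβ) 2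
    rwa [mul_assoc, mul_pow, ← Real.sqrt_mul (by positivity), Real.sq_sqrt (by positivity)] at this
  have hstep : LF * ‖h' l‖ + Lh * LF ^ 2 * δ / 2 ≤ β - Lf := by
    refine add_half_le_of_sq_add_le (by linarith) (by positivity) ?_
    nlinarith [mul_le_mul_of_nonneg_left hgrad (sq_nonneg LF),
      mul_le_mul_of_nonneg_left hl (by positivity : 0 ≤ 2 * Lh * LF ^ 2)]
  have hhFs : h (F s) ≤ h l + ‖h' l‖ * (LF / 2 * δ) + Lh / 2 * (LF / 2 * δ) ^ 2 := by
    have hinner := (real_inner_le_norm (h' l) (F s - l)).trans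
      (mul_le_mul_of_nonneg_left hFs (norm_nonneg _))
    have hsq := pow_le_pow_left₀ (norm_nonneg _) hFs 2
    nlinarith [hh_desc]
  nlinarith [mul_le_mul_of_nonneg_right hstep (by positivity : 0 ≤ δ / 2)]

end ProxLinear

section BlockUpdate

variable {b : ℕ} {n : Fin b → ℕ} (x : PiLp 2 (fun i => EuclideanSpace ℝ (Fin (n i))))
  (i : Fin b)

@[simp]
theorem upd_apply_self (s : EuclideanSpace ℝ (Fin (n i))) : upd x i s i = s := by
  simp [upd]

theorem upd_apply_of_ne {j : Fin b} (hj : j ≠ i) (s : EuclideanSpace ℝ (Fin (n i))) :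
    upd x i s j = x j := by
  simp [upd, hj]

@[simp]
theorem upd_eq_self : upd x i (x i) = x := by
  simp [upd]

@[simp]
theorem upd_upd (s t : EuclideanSpace ℝ (Fin (n i))) : upd (upd x i s) i t = upd x i t := by
  simp [upd]

theorem upd_sub_upd (s t : EuclideanSpace ℝ (Fin (n i))) :
    upd x i s - upd x i t = PiLp.single 2 i (s - t) := by
  ext j : 1
  by_cases hj : j = i
  · subst hj; simp
  · simp [upd_apply_of_ne x i hj, hj]

@[simp]
theorem norm_upd_sub_upd (s t : EuclideanSpace ℝ (Fin (n i))) :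
    ‖upd x i s - upd x i t‖ = ‖s - t‖ := by
  rw [upd_sub_upd, PiLp.norm_single]

@[simp]
theorem norm_upd_sub (s : EuclideanSpace ℝ (Fin (n i))) : ‖upd x i s - x‖ = ‖s - x i‖ := by
  simpa using norm_upd_sub_upd x i s (x i)

theorem upd_convexComb (s t : EuclideanSpace ℝ (Fin (n i))) {α β : ℝ} (hαβ : α + β = 1) :
    upd x i (α • s + β • t) = α • upd x i s + β • upd x i t := by
  ext j : 1
  by_cases hj : j = i
  · subst hj; simp
  · simp [upd_apply_of_ne x i hj, ← add_smul, hαβ]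

theorem Convex.preimage_upd {C : Set (PiLp 2 (fun i => EuclideanSpace ℝ (Fin (n i))))}
    (hC : Convex ℝ C) : Convex ℝ {s | upd x i s ∈ C} := by
  intro s hs t ht α β hα hβ hαβ
  show upd x i (α • s + β • t) ∈ C
  rw [upd_convexComb x i s t hαβ]
  exact hC hs ht hα hβ hαβ

theorem sum_upd (g : (i : Fin b) → EuclideanSpace ℝ (Fin (n i)) → ℝ)
    (s : EuclideanSpace ℝ (Fin (n i))) :
    ∑ j, g j (upd x i s j) = ∑ j, g j (x j) - g i (x i) + g i s := by
  rw [← Finset.add_sum_erase _ _ (Finset.mem_univ i),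
    ← Finset.add_sum_erase _ (fun j => g j (x j)) (Finset.mem_univ i), upd_apply_self,
    Finset.sum_congr rfl fun j hj => by rw [upd_apply_of_ne x i (Finset.ne_of_mem_erase hj)]]
  ring

end BlockUpdate

theorem sufficient_decrease_general
    {b m : ℕ} {n : Fin b → ℕ}
    (f : PiLp 2 (fun i => EuclideanSpace ℝ (Fin (n i))) → ℝ)
    (F : PiLp 2 (fun i => EuclideanSpace ℝ (Fin (n i))) → EuclideanSpace ℝ (Fin m))
    (h : EuclideanSpace ℝ (Fin m) → ℝ)
    (hhconv : ConvexOn ℝ Set.univ h)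
    (Lh : ℝ) (hLh : 0 < Lh)
    (gradh : EuclideanSpace ℝ (Fin m) → EuclideanSpace ℝ (Fin m))
    (hgradh : ∀ u, HasGradientAt h (gradh u) u)
    (hgradhLip : ∀ u v, ‖gradh u - gradh v‖ ≤ Lh * ‖u - v‖)
    (g : (i : Fin b) → EuclideanSpace ℝ (Fin (n i)) → ℝ)
    (hg : ∀ i, ConvexOn ℝ Set.univ (g i))
    -- lower bounds `f ≥ f^*`, `h ≥ h^*`, `Σᵢ gᵢ ≥ g^*`; `φ^* = f^* + h^* + g^*`
    (fstar hstar gstar : ℝ)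
    (hfstar : ∀ y, fstar ≤ f y) (hhstar : ∀ u, hstar ≤ h u)
    (hgstar : ∀ y : PiLp 2 (fun i => EuclideanSpace ℝ (Fin (n i))), gstar ≤ ∑ j, g j (y j))
    (x : PiLp 2 (fun i => EuclideanSpace ℝ (Fin (n i)))) (i : Fin b)
    (β Lf LF : ℝ) (hLF : 0 < LF) (hβLf : Lf < β)
    -- `gif y = ∇_i f(y)`, the gradient at `y^i` of `s ↦ f(y[i ↦ s])`
    (gif : PiLp 2 (fun i => EuclideanSpace ℝ (Fin (n i))) → EuclideanSpace ℝ (Fin (n i)))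
    (hgif : ∀ y, HasGradientAt (fun s => f (upd y i s)) (gif y) (y i))
    -- `GiF y = ∇_i F(y)`, the Fréchet derivative at `y^i` of `s ↦ F(y[i ↦ s])`
    (GiF : PiLp 2 (fun i => EuclideanSpace ℝ (Fin (n i))) →
      (EuclideanSpace ℝ (Fin (n i)) →L[ℝ] EuclideanSpace ℝ (Fin m)))
    (hGiF : ∀ y, HasFDerivAt (fun s => F (upd y i s)) (GiF y) (y i))
    -- step-size condition `β ≥ L^f_i + L^F_i √(2 L_h) √(φ(x) − φ^*)`
    (hβcond : Lf + LF * Real.sqrt (2 * Lh) *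
        Real.sqrt ((f x + h (F x) + ∑ j, g j (x j)) - (fstar + hstar + gstar)) ≤ β)
    -- `sp` is a global minimizer of `q_β(s) = φ̄^i(s;x) + (β/2)‖s − x^i‖²`
    (sp : EuclideanSpace ℝ (Fin (n i)))
    (hmin : ∀ t,
      (f x + ⟪gif x, sp - x i⟫ + h (F x + GiF x (sp - x i)) + g i sp)
          + β / 2 * ‖sp - x i‖ ^ 2
        ≤ (f x + ⟪gif x, t - x i⟫ + h (F x + GiF x (t - x i)) + g i t)
          + β / 2 * ‖t - x i‖ ^ 2)
    -- `C` is a convex set containing `x` and `x₊ = x[i ↦ sp]`, on which the block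
    -- gradients of `f` and `F` are Lipschitz
    (C : Set (PiLp 2 (fun i => EuclideanSpace ℝ (Fin (n i)))))
    (hC : Convex ℝ C) (hxC : x ∈ C) (hxpC : upd x i sp ∈ C)
    (hgifLip : ∀ y ∈ C, ∀ z ∈ C, ‖gif y - gif z‖ ≤ Lf * ‖y - z‖)
    (hGiFLip : ∀ y ∈ C, ∀ z ∈ C, ‖GiF y - GiF z‖ ≤ LF * ‖y - z‖) :
    f (upd x i sp) + h (F (upd x i sp)) + ∑ j, g j (upd x i sp j)
      ≤ (f x + h (F x) + ∑ j, g j (x j)) - β / 2 * ‖upd x i sp - x‖ ^ 2 := by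
  have hblock := proxLinear_sufficient_decrease (f := fun s => f (upd x i s))
    (F := fun s => F (upd x i s)) (g := g i) (f' := fun s => gif (upd x i s))
    (F' := fun s => GiF (upd x i s)) (gstar := gstar - (∑ j, g j (x j) - g i (x i)))
    (hC.preimage_upd x i) (a := x i) (by simpa using hxC) hxpC
    (fun y _ => by simpa using hgif (upd x i y))
    (fun y hy => by simpa using hgifLip _ hy x hxC)
    (fun y _ => by simpa using hGiF (upd x i y))
    (fun y hy => by simpa using hGiFLip _ hy x hxC)
    hhconv hgradh hLh hgradhLip (hg i) (fun y => hfstar _) hhstar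
    (fun y => by linarith [hgstar (upd x i y), sum_upd x i g y]) hLF.le hβLf
    (by convert hβcond using 4; simp only [upd_eq_self]; ring)
    (by simpa only [upd_eq_self] using hmin)
  rw [sum_upd, norm_upd_sub]
  simp only [upd_eq_self] at hblock
  linarith

/-- sufficient decrease, Lemma 3.1: under the step-size condition
`β ≥ L^f_i + L^F_i √(2L_h) √(φ(x) − φ^*)`, at a global minimizer `sp` of the
regularized block model, with `x₊ = x[i ↦ sp]`,
`φ(x₊) ≤ φ(x) − (β/2)‖x₊ − x‖²`. -/
theorem sufficient_decrease
    {b m : ℕ} (hb : 0 < b) (hm : 0 < m) {n : Fin b → ℕ} (hn : ∀ i, 0 < n i)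
    (f : PiLp 2 (fun i => EuclideanSpace ℝ (Fin (n i))) → ℝ)
    (hf : Differentiable ℝ f)
    (F : PiLp 2 (fun i => EuclideanSpace ℝ (Fin (n i))) → EuclideanSpace ℝ (Fin m))
    (hF : Differentiable ℝ F)
    (h : EuclideanSpace ℝ (Fin m) → ℝ)
    (hhconv : ConvexOn ℝ Set.univ h) (hhdiff : Differentiable ℝ h)
    (Lh : ℝ) (hLh : 0 < Lh)
    (gradh : EuclideanSpace ℝ (Fin m) → EuclideanSpace ℝ (Fin m))
    (hgradh : ∀ u, HasGradientAt h (gradh u) u)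
    (hgradhLip : ∀ u v, ‖gradh u - gradh v‖ ≤ Lh * ‖u - v‖)
    (g : (i : Fin b) → EuclideanSpace ℝ (Fin (n i)) → ℝ)
    (hg : ∀ i, ConvexOn ℝ Set.univ (g i))
    -- lower bounds `f ≥ f^*`, `h ≥ h^*`, `Σᵢ gᵢ ≥ g^*`; `φ^* = f^* + h^* + g^*`
    (fstar hstar gstar : ℝ)
    (hfstar : ∀ y, fstar ≤ f y) (hhstar : ∀ u, hstar ≤ h u)
    (hgstar : ∀ y : PiLp 2 (fun i => EuclideanSpace ℝ (Fin (n i))), gstar ≤ ∑ j, g j (y j))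
    (x : PiLp 2 (fun i => EuclideanSpace ℝ (Fin (n i)))) (i : Fin b)
    (β Lf LF : ℝ) (hβ : 0 < β) (hLF : 0 < LF) (hβLf : Lf < β)
    -- `gif y = ∇_i f(y)`, the gradient at `y^i` of `s ↦ f(y[i ↦ s])`
    (gif : PiLp 2 (fun i => EuclideanSpace ℝ (Fin (n i))) → EuclideanSpace ℝ (Fin (n i)))
    (hgif : ∀ y, HasGradientAt (fun s => f (upd y i s)) (gif y) (y i))
    -- `GiF y = ∇_i F(y)`, the Fréchet derivative at `y^i` of `s ↦ F(y[i ↦ s])`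
    (GiF : PiLp 2 (fun i => EuclideanSpace ℝ (Fin (n i))) →
      (EuclideanSpace ℝ (Fin (n i)) →L[ℝ] EuclideanSpace ℝ (Fin m)))
    (hGiF : ∀ y, HasFDerivAt (fun s => F (upd y i s)) (GiF y) (y i))
    -- step-size condition `β ≥ L^f_i + L^F_i √(2 L_h) √(φ(x) − φ^*)`
    (hβcond : Lf + LF * Real.sqrt (2 * Lh) *
        Real.sqrt ((f x + h (F x) + ∑ j, g j (x j)) - (fstar + hstar + gstar)) ≤ β)
    -- `sp` is a global minimizer of `q_β(s) = φ̄^i(s;x) + (β/2)‖s − x^i‖²`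
    (sp : EuclideanSpace ℝ (Fin (n i)))
    (hmin : ∀ t,
      (f x + ⟪gif x, sp - x i⟫ + h (F x + GiF x (sp - x i)) + g i sp)
          + β / 2 * ‖sp - x i‖ ^ 2
        ≤ (f x + ⟪gif x, t - x i⟫ + h (F x + GiF x (t - x i)) + g i t)
          + β / 2 * ‖t - x i‖ ^ 2)
    -- `C` is a convex set containing `x` and `x₊ = x[i ↦ sp]`, on which the block
    -- gradients of `f` and `F` are Lipschitz
    (C : Set (PiLp 2 (fun i => EuclideanSpace ℝ (Fin (n i)))))
    (hC : Convex ℝ C) (hxC : x ∈ C) (hxpC : upd x i sp ∈ C)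
    (hgifLip : ∀ y ∈ C, ∀ z ∈ C, ‖gif y - gif z‖ ≤ Lf * ‖y - z‖)
    (hGiFLip : ∀ y ∈ C, ∀ z ∈ C, ‖GiF y - GiF z‖ ≤ LF * ‖y - z‖) :
    f (upd x i sp) + h (F (upd x i sp)) + ∑ j, g j (upd x i sp j)
      ≤ (f x + h (F x) + ∑ j, g j (x j)) - β / 2 * ‖upd x i sp - x‖ ^ 2 :=
  sufficient_decrease_general f F h hhconv Lh hLh gradh hgradh hgradhLip g hg fstar hstar gstar
    hfstar hhstar hgstar x i β Lf LF hLF hβLf gif hgif GiF hGiF hβcond sp hmin C hC hxC hxpC hgifLip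
    hGiFLip
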